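/- arXiv:math/9807086 — 2 statements merged into one kernel-verified Lean document; each statement's English description precedes it below -/
import Mathlib

section
/- Let H : ℝ³ → ℝ be smooth (coordinates (φ,p⁰,p¹)) and let a vector field ξ = (ξ_φ, ξ_{p⁰}, ξ_{p¹}) on ℝ³ satisfy dH · ξ = 0 everywhere. Suppose ξ admits momentum functions P⁰, P¹ : ℝ³ → ℝ with dP⁰ = ξ ⌟ ω⁰ and dP¹ = ξ ⌟ ω¹, where ω⁰ = dφ ∧ dp⁰ and ω¹ = dφ ∧ dp¹. Then along any solution z : ℝ² → ℝ³ of M ∂z/∂x⁰ + K ∂z/∂x¹ = -∇H(z) (with M,K as in Bridges' formulation), one has ∂(P⁰∘z)/∂x⁰ + ∂(P¹∘z)/∂x¹ = 0. -/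
/-!
Contracting the field equation `M z_{x⁰} + K z_{x¹} = -∇H(z)` with `ξ` gives
`ω⁰(ξ, z_{x⁰}) + ω¹(ξ, z_{x¹}) = dH(ξ)`. By the chain rule and the momentum equations the left
side is `∂(P⁰∘z)/∂x⁰ + ∂(P¹∘z)/∂x¹`, and the right side vanishes by invariance of `H`.
-/

/-- `ω⁰ = dφ ∧ dp⁰` on `ℝ³ = (φ, p⁰, p¹)`. -/
def omega0 (u v : Fin 3 → ℝ) : ℝ := u 0 * v 1 - u 1 * v 0

/-- `ω¹ = dφ ∧ dp¹` on `ℝ³ = (φ, p⁰, p¹)`. -/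
def omega1 (u v : Fin 3 → ℝ) : ℝ := u 0 * v 2 - u 2 * v 0

theorem LinearMap.apply_eq_fin_three {R M : Type*} [CommSemiring R] [AddCommMonoid M]
    [Module R M] (L : (Fin 3 → R) →ₗ[R] M) (v : Fin 3 → R) :
    L v = v 0 • L ![1, 0, 0] + v 1 • L ![0, 1, 0] + v 2 • L ![0, 0, 1] := by
  have hv : v = v 0 • ![1, 0, 0] + v 1 • ![0, 1, 0] + v 2 • ![0, 0, 1] := by
    funext i
    fin_cases i <;> simp
  conv_lhs => rw [hv]
  simp only [map_add, map_smul]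

theorem omega0_add_omega1_eq_of_field_eq (L : (Fin 3 → ℝ) →L[ℝ] ℝ) (w a b : Fin 3 → ℝ)
    (hφ : -a 1 - b 2 = -L ![1, 0, 0]) (hp0 : a 0 = -L ![0, 1, 0])
    (hp1 : b 0 = -L ![0, 0, 1]) :
    omega0 w a + omega1 w b = L w := by
  rw [show L w = _ from L.toLinearMap.apply_eq_fin_three w]
  simp only [omega0, omega1, ContinuousLinearMap.coe_coe, smul_eq_mul]
  linear_combination (-w 0) * hφ - w 1 * hp0 - w 2 * hp1

theorem stmt1_general (H P0 P1 : (Fin 3 → ℝ) → ℝ) (ξ : (Fin 3 → ℝ) → (Fin 3 → ℝ))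
    (hP0 : ContDiff ℝ (⊤ : ℕ∞) P0)
    (hP1 : ContDiff ℝ (⊤ : ℕ∞) P1)
    (hsym : ∀ y, fderiv ℝ H y (ξ y) = 0)
    (hmom0 : ∀ y v, fderiv ℝ P0 y v = ξ y 0 * v 1 - ξ y 1 * v 0)
    (hmom1 : ∀ y v, fderiv ℝ P1 y v = ξ y 0 * v 2 - ξ y 2 * v 0)
    (z : (Fin 2 → ℝ) → (Fin 3 → ℝ)) (hz : ContDiff ℝ (⊤ : ℕ∞) z)
    (hsol : ∀ x,
        (-(fderiv ℝ z x ![1,0] 1) - fderiv ℝ z x ![0,1] 2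
            = -(fderiv ℝ H (z x) ![1,0,0]))
      ∧ (fderiv ℝ z x ![1,0] 0 = -(fderiv ℝ H (z x) ![0,1,0]))
      ∧ (fderiv ℝ z x ![0,1] 0 = -(fderiv ℝ H (z x) ![0,0,1]))) :
    ∀ x, fderiv ℝ (P0 ∘ z) x ![1,0] + fderiv ℝ (P1 ∘ z) x ![0,1] = 0 := by
  intro x
  obtain ⟨hφ, hp0, hp1⟩ := hsol x
  have hzx : DifferentiableAt ℝ z x := hz.differentiable (by simp) x
  calc fderiv ℝ (P0 ∘ z) x ![1,0] + fderiv ℝ (P1 ∘ z) x ![0,1]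
      = omega0 (ξ (z x)) (fderiv ℝ z x ![1,0]) + omega1 (ξ (z x)) (fderiv ℝ z x ![0,1]) := by
        rw [fderiv_comp x (hP0.differentiable (by simp) _) hzx,
          fderiv_comp x (hP1.differentiable (by simp) _) hzx]
        simp only [ContinuousLinearMap.comp_apply, hmom0, hmom1, omega0, omega1]
    _ = fderiv ℝ H (z x) (ξ (z x)) :=
        omega0_add_omega1_eq_of_field_eq _ _ _ _ hφ hp0 hp1
    _ = 0 := hsym _

/-- Bridges' Noether theorem on ℝ³ (coordinates (φ,p⁰,p¹) indexed 0,1,2):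
if dH·ξ = 0 and ξ admits momentum functions P⁰, P¹ with dP⁰ = ξ ⌟ ω⁰,
dP¹ = ξ ⌟ ω¹ (ω⁰ = dφ∧dp⁰, ω¹ = dφ∧dp¹), then along any solution of
M ∂z/∂x⁰ + K ∂z/∂x¹ = -∇H(z), ∂(P⁰∘z)/∂x⁰ + ∂(P¹∘z)/∂x¹ = 0. -/
theorem stmt1 (H P0 P1 : (Fin 3 → ℝ) → ℝ) (ξ : (Fin 3 → ℝ) → (Fin 3 → ℝ))
    (hH : ContDiff ℝ (⊤ : ℕ∞) H) (hP0 : ContDiff ℝ (⊤ : ℕ∞) P0)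
    (hP1 : ContDiff ℝ (⊤ : ℕ∞) P1) (hξ : ContDiff ℝ (⊤ : ℕ∞) ξ)
    (hsym : ∀ y, fderiv ℝ H y (ξ y) = 0)
    (hmom0 : ∀ y v, fderiv ℝ P0 y v = ξ y 0 * v 1 - ξ y 1 * v 0)
    (hmom1 : ∀ y v, fderiv ℝ P1 y v = ξ y 0 * v 2 - ξ y 2 * v 0)
    (z : (Fin 2 → ℝ) → (Fin 3 → ℝ)) (hz : ContDiff ℝ (⊤ : ℕ∞) z)
    (hsol : ∀ x,
        (-(fderiv ℝ z x ![1,0] 1) - fderiv ℝ z x ![0,1] 2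
            = -(fderiv ℝ H (z x) ![1,0,0]))
      ∧ (fderiv ℝ z x ![1,0] 0 = -(fderiv ℝ H (z x) ![0,1,0]))
      ∧ (fderiv ℝ z x ![0,1] 0 = -(fderiv ℝ H (z x) ![0,0,1]))) :
    ∀ x, fderiv ℝ (P0 ∘ z) x ![1,0] + fderiv ℝ (P1 ∘ z) x ![0,1] = 0 :=
  stmt1_general H P0 P1 ξ hP0 hP1 hsym hmom0 hmom1 z hz hsol
end

section
/- Generalization to n+1 spacetime dimensions: let H : ℝ^{n+2} → ℝ be smooth with coordinates (φ, p⁰, …, pⁿ), let ξ be a vector field on ℝ^{n+2} with dH · ξ = 0, and suppose for each μ = 0,…,n there exists a smooth Pᵘ : ℝ^{n+2} → ℝ with dPᵘ = ξ ⌟ ωᵘ, where ωᵘ = dφ ∧ dpᵘ. Then for any solution z : ℝ^{n+1} → ℝ^{n+2} of the multihamiltonian system ∑_μ ωᵘ(∂z/∂xᵘ, ·) = -dH(z), the divergence ∑_μ ∂(Pᵘ∘z)/∂xᵘ vanishes identically. -/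
open scoped BigOperators

/-! Contracting the field equations with the symmetry ξ gives
`∑_μ ωᵘ(∂_μ z, ξ) = -dH(ξ) = 0`. By the chain rule and `dPᵘ = ξ ⌟ ωᵘ`, the divergence
`∑_μ ∂_μ (Pᵘ ∘ z)` equals `∑_μ ωᵘ(ξ, ∂_μ z)`, which is the same sum up to the antisymmetry of
each `ωᵘ`. -/

/-- `ωᵘ = dφ ∧ dpᵘ` on `ℝ^{n+2}`, where `φ` is coordinate `0` and `pᵘ` is coordinate `μ.succ`. -/
def presymplecticForm {n : ℕ} (μ : Fin (n + 1)) (u v : Fin (n + 2) → ℝ) : ℝ :=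
  u 0 * v μ.succ - u μ.succ * v 0

lemma presymplecticForm_swap {n : ℕ} (μ : Fin (n + 1)) (u v : Fin (n + 2) → ℝ) :
    presymplecticForm μ v u = -presymplecticForm μ u v := by
  unfold presymplecticForm
  ring

lemma sum_presymplecticForm_contract_eq {n : ℕ} {L : (Fin (n + 2) → ℝ) → ℝ}
    {d : Fin (n + 1) → Fin (n + 2) → ℝ}
    (hsol : ∀ U, ∑ μ, presymplecticForm μ (d μ) U = -L U) (ξ : Fin (n + 2) → ℝ) :
    ∑ μ, presymplecticForm μ ξ (d μ) = L ξ := by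
  simp only [presymplecticForm_swap _ _ ξ, Finset.sum_neg_distrib, hsol, neg_neg]

theorem stmt2_general (n : ℕ) (H : (Fin (n+2) → ℝ) → ℝ)
    (ξ : (Fin (n+2) → ℝ) → (Fin (n+2) → ℝ))
    (P : Fin (n+1) → (Fin (n+2) → ℝ) → ℝ) (hP : ∀ μ, ContDiff ℝ (⊤ : ℕ∞) (P μ))
    (hsym : ∀ y, fderiv ℝ H y (ξ y) = 0)
    (hmom : ∀ (μ : Fin (n+1)) (y : Fin (n+2) → ℝ) (v : Fin (n+2) → ℝ),
      fderiv ℝ (P μ) y v = ξ y 0 * v μ.succ - ξ y μ.succ * v 0)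
    (z : (Fin (n+1) → ℝ) → (Fin (n+2) → ℝ)) (hz : ContDiff ℝ (⊤ : ℕ∞) z)
    (hsol : ∀ (x : Fin (n+1) → ℝ) (U : Fin (n+2) → ℝ),
      ∑ μ : Fin (n+1),
        (fderiv ℝ z x (Pi.single μ 1) 0 * U μ.succ
          - fderiv ℝ z x (Pi.single μ 1) μ.succ * U 0)
        = -(fderiv ℝ H (z x) U)) :
    ∀ x, ∑ μ : Fin (n+1), fderiv ℝ (P μ ∘ z) x (Pi.single μ 1) = 0 := by
  intro x
  have hzx : DifferentiableAt ℝ z x := (hz.differentiable (by norm_num)).differentiableAt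
  calc ∑ μ, fderiv ℝ (P μ ∘ z) x (Pi.single μ 1)
      = ∑ μ, presymplecticForm μ (ξ (z x)) (fderiv ℝ z x (Pi.single μ 1)) := by
        refine Finset.sum_congr rfl fun μ _ => ?_
        rw [fderiv_comp x ((hP μ).differentiable (by norm_num)).differentiableAt hzx]
        exact hmom μ (z x) _
    _ = fderiv ℝ H (z x) (ξ (z x)) := sum_presymplecticForm_contract_eq (hsol x) _
    _ = 0 := hsym _

/-- Bridges' Noether theorem in n+1 spacetime dimensions: coordinates on ℝ^{n+2}
are (φ, p⁰, …, pⁿ) with φ indexed by 0 and pᵘ by μ.succ; ωᵘ = dφ ∧ dpᵘ, so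
(ξ ⌟ ωᵘ)(v) = ξ₀ v_{μ.succ} - ξ_{μ.succ} v₀.  If dH·ξ = 0 and dPᵘ = ξ ⌟ ωᵘ, then
along any solution z of the multihamiltonian system ∑_μ ωᵘ(∂z/∂xᵘ, ·) = -dH(z),
the divergence ∑_μ ∂(Pᵘ∘z)/∂xᵘ vanishes identically. -/
theorem stmt2 (n : ℕ) (H : (Fin (n+2) → ℝ) → ℝ) (hH : ContDiff ℝ (⊤ : ℕ∞) H)
    (ξ : (Fin (n+2) → ℝ) → (Fin (n+2) → ℝ)) (hξ : ContDiff ℝ (⊤ : ℕ∞) ξ)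
    (P : Fin (n+1) → (Fin (n+2) → ℝ) → ℝ) (hP : ∀ μ, ContDiff ℝ (⊤ : ℕ∞) (P μ))
    (hsym : ∀ y, fderiv ℝ H y (ξ y) = 0)
    (hmom : ∀ (μ : Fin (n+1)) (y : Fin (n+2) → ℝ) (v : Fin (n+2) → ℝ),
      fderiv ℝ (P μ) y v = ξ y 0 * v μ.succ - ξ y μ.succ * v 0)
    (z : (Fin (n+1) → ℝ) → (Fin (n+2) → ℝ)) (hz : ContDiff ℝ (⊤ : ℕ∞) z)
    (hsol : ∀ (x : Fin (n+1) → ℝ) (U : Fin (n+2) → ℝ),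
      ∑ μ : Fin (n+1),
        (fderiv ℝ z x (Pi.single μ 1) 0 * U μ.succ
          - fderiv ℝ z x (Pi.single μ 1) μ.succ * U 0)
        = -(fderiv ℝ H (z x) U)) :
    ∀ x, ∑ μ : Fin (n+1), fderiv ℝ (P μ ∘ z) x (Pi.single μ 1) = 0 :=
  stmt2_general n H ξ P hP hsym hmom z hz hsol
end
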